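/- arXiv:1511.00658 — 3 statements merged into one kernel-verified Lean document; each statement's English description precedes it below -/
import Mathlib

section
/- Let M ≥ 1 be an integer and let n ≥ 2, k ≥ 1 be integers with 1/2 ≤ k/M ≤ 5/6 and (n-2+k)/M < 1. Set α = (n-2)π/M. Then sin((n-2+k)π/M) / sin(kπ/M) ≥ 1 - √3 α - (1/2)α². -/
open Real

theorem stmt_11 (M n k : ℕ) (hM : 1 ≤ M) (hn : 2 ≤ n) (hk : 1 ≤ k)
    (h1 : (1 : ℝ) / 2 ≤ (k : ℝ) / M) (h2 : (k : ℝ) / M ≤ 5 / 6)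
    (h3 : ((n : ℝ) - 2 + k) / M < 1) :
    Real.sin (((n : ℝ) - 2 + k) * Real.pi / M) / Real.sin (k * Real.pi / M)
      ≥ 1 - Real.sqrt 3 * (((n : ℝ) - 2) * Real.pi / M)
          - (((n : ℝ) - 2) * Real.pi / M) ^ 2 / 2 := by
  have hMpos : (0:ℝ) < M := by exact_mod_cast hM
  have hπ := Real.pi_pos
  have hn2 : (0:ℝ) ≤ (n:ℝ) - 2 := by
    have : (2:ℝ) ≤ n := by exact_mod_cast hn
    linarith
  set α : ℝ := ((n:ℝ) - 2) * Real.pi / M with hαdef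
  set θ : ℝ := (k:ℝ) * Real.pi / M with hθdef
  have hα0 : 0 ≤ α := by positivity
  have hθ1 : Real.pi / 2 ≤ θ := by
    have := mul_le_mul_of_nonneg_right h1 hπ.le
    have e : (k:ℝ)/M*Real.pi = θ := by rw [hθdef]; ring
    rw [e] at this; linarith
  have hθ2 : θ ≤ 5 * Real.pi / 6 := by
    have := mul_le_mul_of_nonneg_right h2 hπ.le
    have e : (k:ℝ)/M*Real.pi = θ := by rw [hθdef]; ring
    rw [e] at this; linarith
  have hsum : α + θ < Real.pi := by
    have := mul_lt_mul_of_pos_right h3 hπ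
    have e : ((n:ℝ) - 2 + k)/M*Real.pi = α + θ := by rw [hαdef, hθdef]; ring
    rw [e] at this; linarith
  have hsinθ : (1:ℝ)/2 ≤ Real.sin θ := by
    have h := Real.cos_le_cos_of_nonneg_of_le_pi (x := θ - Real.pi/2) (y := Real.pi/3)
      (by linarith) (by linarith) (by linarith)
    rw [Real.cos_pi_div_three, Real.cos_sub_pi_div_two] at h
    exact h
  have hsinθpos : 0 < Real.sin θ := by linarith
  have hcosθ_le : Real.cos θ ≤ 0 :=
    Real.cos_nonpos_of_pi_div_two_le_of_le hθ1 (by linarith)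
  have hcosθ_ge : -(Real.sqrt 3 / 2) ≤ Real.cos θ := by
    have h := Real.cos_le_cos_of_nonneg_of_le_pi (x := θ) (y := 5 * Real.pi / 6)
      (by linarith) (by linarith) hθ2
    have e : Real.cos (5 * Real.pi / 6) = -(Real.sqrt 3 / 2) := by
      rw [show (5 * Real.pi / 6 : ℝ) = Real.pi - Real.pi / 6 by ring, Real.cos_pi_sub,
        Real.cos_pi_div_six]
    linarith [e ▸ h]
  have hsinα_le : Real.sin α ≤ α := Real.sin_le hα0
  have hsinα_0 : 0 ≤ Real.sin α :=
    Real.sin_nonneg_of_nonneg_of_le_pi hα0 (by linarith)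
  have hcosα : 1 - α ^ 2 / 2 ≤ Real.cos α := Real.one_sub_sq_div_two_le_cos
  have hs3 : (0:ℝ) ≤ Real.sqrt 3 := Real.sqrt_nonneg 3
  have e : ((n:ℝ) - 2 + k) * Real.pi / M = α + θ := by rw [hαdef, hθdef]; ring
  rw [e, Real.sin_add, ge_iff_le, le_div_iff₀ hsinθpos]
  have e1 : α * Real.cos θ ≤ Real.sin α * Real.cos θ := by nlinarith
  have e2 : -(Real.sqrt 3 * Real.sin θ) ≤ Real.cos θ := by nlinarith
  have e3 : α * (-(Real.sqrt 3 * Real.sin θ)) ≤ α * Real.cos θ :=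
    mul_le_mul_of_nonneg_left e2 hα0
  have e4 : (1 - α ^ 2 / 2) * Real.sin θ ≤ Real.cos α * Real.sin θ :=
    mul_le_mul_of_nonneg_right hcosα hsinθpos.le
  nlinarith
end

section
/- Let c be a real number with 0 < c < 1. Then lim_{N→∞} (1/N) ∑_{k=1}^{⌊cN⌋} log(2 sin(kπ/N)) = (1/π) ∫_0^{cπ} log(2 sin t) dt. -/
/-!
On `(0, 1)` write `log (2 sin πx) = log x + (log (2 sin πx) - log x)`. The first summand is
increasing; the second equals `log (2π · sin (πx) / (πx))` and is decreasing because `sin y / y`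
is, by concavity of `sin` on `[0, π]`. Both are integrable in spite of the singularity at `0`.
For a monotone integrable `f` on `(0, d]` and `c < d`, the right-endpoint sums
`(1/N) ∑_{k < ⌊cN⌋} f ((k+1)/N)` are squeezed between `∫` over `[1/N, (⌊cN⌋+1)/N]` and over
`[0, ⌊cN⌋/N]`, both of which tend to `∫₀ᶜ f`. The substitution `t = πx` gives the statement.
-/

open Filter MeasureTheory Set Topology

theorem AntitoneOn.sub_mul_le_intervalIntegral {f : ℝ → ℝ} {a b : ℝ} (hab : a ≤ b)
    (hf : AntitoneOn f (Ioc a b)) (hint : IntervalIntegrable f volume a b) :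
    (b - a) * f b ≤ ∫ x in a..b, f x := by
  rw [← smul_eq_mul, ← intervalIntegral.integral_const]
  exact intervalIntegral.integral_mono_on_of_le_Ioo hab intervalIntegrable_const hint
    fun x hx ↦ hf (Ioo_subset_Ioc_self hx) ⟨hx.1.trans hx.2, le_rfl⟩ hx.2.le

theorem AntitoneOn.intervalIntegral_le_sub_mul {f : ℝ → ℝ} {a b : ℝ} (hab : a ≤ b)
    (hf : AntitoneOn f (Ico a b)) (hint : IntervalIntegrable f volume a b) :
    ∫ x in a..b, f x ≤ (b - a) * f a := by
  rw [← smul_eq_mul, ← intervalIntegral.integral_const]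
  exact intervalIntegral.integral_mono_on_of_le_Ioo hab hint intervalIntegrable_const
    fun x hx ↦ hf ⟨le_rfl, hx.1.trans hx.2⟩ (Ioo_subset_Ico_self hx) hx.1.le

section Partition

variable {f : ℝ → ℝ} {x : ℕ → ℝ} {n : ℕ}

theorem IntervalIntegrable.mono_partition (hint : IntervalIntegrable f volume (x 0) (x n))
    (hx : Monotone x) {k : ℕ} (hk : k < n) : IntervalIntegrable f volume (x k) (x (k + 1)) :=
  hint.mono_set <| by
    rw [uIcc_of_le (hx (Nat.zero_le n)), uIcc_of_le (hx k.le_succ)]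
    exact Icc_subset_Icc (hx (Nat.zero_le k)) (hx hk)

theorem AntitoneOn.sum_sub_mul_le_intervalIntegral (hx : Monotone x)
    (hf : AntitoneOn f (Ioc (x 0) (x n))) (hint : IntervalIntegrable f volume (x 0) (x n)) :
    ∑ k ∈ Finset.range n, (x (k + 1) - x k) * f (x (k + 1)) ≤ ∫ t in x 0..x n, f t := by
  have hcell : ∀ k < n, IntervalIntegrable f volume (x k) (x (k + 1)) :=
    fun _ hk ↦ hint.mono_partition hx hk
  rw [← intervalIntegral.sum_integral_adjacent_intervals hcell]
  refine Finset.sum_le_sum fun k hk ↦ ?_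
  have hk := Finset.mem_range.1 hk
  exact (hf.mono (Ioc_subset_Ioc (hx (Nat.zero_le k)) (hx hk))).sub_mul_le_intervalIntegral
    (hx k.le_succ) (hcell k hk)

theorem AntitoneOn.intervalIntegral_le_sum_sub_mul (hx : Monotone x)
    (hf : AntitoneOn f (Ico (x 0) (x n))) (hint : IntervalIntegrable f volume (x 0) (x n)) :
    ∫ t in x 0..x n, f t ≤ ∑ k ∈ Finset.range n, (x (k + 1) - x k) * f (x k) := by
  have hcell : ∀ k < n, IntervalIntegrable f volume (x k) (x (k + 1)) :=
    fun _ hk ↦ hint.mono_partition hx hk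
  rw [← intervalIntegral.sum_integral_adjacent_intervals hcell]
  refine Finset.sum_le_sum fun k hk ↦ ?_
  have hk := Finset.mem_range.1 hk
  exact (hf.mono (Ico_subset_Ico (hx (Nat.zero_le k)) (hx hk))).intervalIntegral_le_sub_mul
    (hx k.le_succ) (hcell k hk)

end Partition

section UniformPartition

variable {f : ℝ → ℝ} (N M : ℕ)

theorem AntitoneOn.riemannSum_le_intervalIntegral (hf : AntitoneOn f (Ioc 0 (M / N)))
    (hint : IntervalIntegrable f volume 0 (M / N)) :
    (1 / (N : ℝ)) * ∑ k ∈ Finset.range M, f ((k + 1) / N) ≤ ∫ t in (0 : ℝ)..M / N, f t := by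
  have hx : Monotone fun k : ℕ ↦ (k : ℝ) / N := fun i j hij ↦
    div_le_div_of_nonneg_right (by simpa using hij) N.cast_nonneg
  have := AntitoneOn.sum_sub_mul_le_intervalIntegral (n := M) hx (by simpa using hf)
    (by simpa using hint)
  simp only [Nat.cast_zero, zero_div, Nat.cast_add_one] at this
  rw [Finset.mul_sum]
  convert this using 2 with k
  ring

theorem AntitoneOn.intervalIntegral_le_riemannSum (hf : AntitoneOn f (Ico (1 / N) ((M + 1) / N)))
    (hint : IntervalIntegrable f volume (1 / N) ((M + 1) / N)) :
    ∫ t in 1 / N..(M + 1) / N, f t ≤ (1 / (N : ℝ)) * ∑ k ∈ Finset.range M, f ((k + 1) / N) := by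
  have hx : Monotone fun k : ℕ ↦ ((k : ℝ) + 1) / N := fun i j hij ↦
    div_le_div_of_nonneg_right (by simpa using hij) N.cast_nonneg
  have := AntitoneOn.intervalIntegral_le_sum_sub_mul (n := M) hx (by simpa using hf)
    (by simpa using hint)
  simp only [Nat.cast_zero, zero_add, Nat.cast_add_one] at this
  rw [Finset.mul_sum]
  convert this using 2 with k
  ring

end UniformPartition

theorem IntervalIntegrable.tendsto_integral_of_tendsto {ι : Type*} {l : Filter ι} {f : ℝ → ℝ}
    {a b p q : ℝ} {u v : ι → ℝ} (hint : IntervalIntegrable f volume a b)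
    (hp : p ∈ uIcc a b) (hq : q ∈ uIcc a b) (hu : Tendsto u l (𝓝 p)) (hv : Tendsto v l (𝓝 q))
    (hu_mem : ∀ᶠ i in l, u i ∈ uIcc a b) (hv_mem : ∀ᶠ i in l, v i ∈ uIcc a b) :
    Tendsto (fun i ↦ ∫ t in v i..u i, f t) l (𝓝 (∫ t in q..p, f t)) := by
  have hprimitive {w : ι → ℝ} {r : ℝ} (hr : r ∈ uIcc a b) (hw : Tendsto w l (𝓝 r))
      (hw_mem : ∀ᶠ i in l, w i ∈ uIcc a b) :
      Tendsto (fun i ↦ ∫ t in a..w i, f t) l (𝓝 (∫ t in a..r, f t)) :=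
    ((intervalIntegral.continuousOn_primitive_interval' hint left_mem_uIcc) r hr).tendsto.comp
      (tendsto_nhdsWithin_iff.2 ⟨hw, hw_mem⟩)
  have hsub {x y : ℝ} (hx : x ∈ uIcc a b) (hy : y ∈ uIcc a b) :
      (∫ t in a..y, f t) - ∫ t in a..x, f t = ∫ t in x..y, f t :=
    intervalIntegral.integral_interval_sub_left
      (hint.mono_set (uIcc_subset_uIcc left_mem_uIcc hy))
      (hint.mono_set (uIcc_subset_uIcc left_mem_uIcc hx))
  rw [← hsub hq hp]
  exact ((hprimitive hp hu hu_mem).sub (hprimitive hq hv hv_mem)).congr'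
    ((hu_mem.and hv_mem).mono fun i hi ↦ hsub hi.2 hi.1)

theorem AntitoneOn.tendsto_riemannSum {f : ℝ → ℝ} {c d : ℝ} (hc : 0 ≤ c) (hcd : c < d)
    (hf : AntitoneOn f (Ioc 0 d)) (hint : IntervalIntegrable f volume 0 d) :
    Tendsto (fun N : ℕ ↦ (1 / (N : ℝ)) * ∑ k ∈ Finset.range ⌊c * N⌋₊, f ((k + 1) / N))
      atTop (𝓝 (∫ t in (0 : ℝ)..c, f t)) := by
  have hd : 0 ≤ d := hc.trans hcd.le
  have hI : uIcc 0 d = Icc 0 d := uIcc_of_le hd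
  have hinv : Tendsto (fun N : ℕ ↦ 1 / (N : ℝ)) atTop (𝓝 0) :=
    tendsto_one_div_atTop_nhds_zero_nat
  have hfloor : Tendsto (fun N : ℕ ↦ (⌊c * N⌋₊ : ℝ) / N) atTop (𝓝 c) :=
    (tendsto_nat_floor_mul_div_atTop hc).comp tendsto_natCast_atTop_atTop
  have hfloor_succ : Tendsto (fun N : ℕ ↦ ((⌊c * N⌋₊ : ℝ) + 1) / N) atTop (𝓝 c) := by
    simpa [add_div] using hfloor.add hinv
  have hfloor_mem (N : ℕ) : (⌊c * N⌋₊ : ℝ) / N ∈ Icc 0 d :=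
    ⟨by positivity,
      (div_le_of_le_mul₀ N.cast_nonneg hc (Nat.floor_le (by positivity))).trans hcd.le⟩
  have hinv_le (N : ℕ) : 1 / (N : ℝ) ≤ (⌊c * N⌋₊ + 1) / N :=
    div_le_div_of_nonneg_right (by simp) N.cast_nonneg
  have hlarge : ∀ᶠ N : ℕ in atTop, 0 < 1 / (N : ℝ) ∧ ((⌊c * N⌋₊ : ℝ) + 1) / N ≤ d :=
    ((eventually_gt_atTop 0).mono fun N hN ↦ by positivity).and
      (hfloor_succ.eventually (Iic_mem_nhds hcd))
  have hc_mem : c ∈ uIcc 0 d := hI ▸ ⟨hc, hcd.le⟩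
  have hupper := hint.tendsto_integral_of_tendsto hc_mem left_mem_uIcc hfloor tendsto_const_nhds
    (.of_forall fun N ↦ hI ▸ hfloor_mem N) (.of_forall fun _ ↦ left_mem_uIcc)
  have hlower := hint.tendsto_integral_of_tendsto hc_mem left_mem_uIcc hfloor_succ hinv
    (hlarge.mono fun N hN ↦ hI ▸ ⟨by positivity, hN.2⟩)
    (hlarge.mono fun N hN ↦ hI ▸ ⟨hN.1.le, (hinv_le N).trans hN.2⟩)
  refine tendsto_of_tendsto_of_tendsto_of_le_of_le' hlower hupper ?_ (.of_forall fun N ↦ ?_)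
  · filter_upwards [hlarge] with N ⟨hN0, hNd⟩
    exact AntitoneOn.intervalIntegral_le_riemannSum N _
      (hf.mono fun t ht ↦ ⟨hN0.trans_le ht.1, ht.2.le.trans hNd⟩)
      (hint.mono_set (hI ▸ uIcc_subset_Icc ⟨hN0.le, (hinv_le N).trans hNd⟩ ⟨by positivity, hNd⟩))
  · exact AntitoneOn.riemannSum_le_intervalIntegral N _
      (hf.mono (Ioc_subset_Ioc_right (hfloor_mem N).2))
      (hint.mono_set (hI ▸ uIcc_subset_Icc ⟨le_rfl, hd⟩ (hfloor_mem N)))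

theorem MonotoneOn.tendsto_riemannSum {f : ℝ → ℝ} {c d : ℝ} (hc : 0 ≤ c) (hcd : c < d)
    (hf : MonotoneOn f (Ioc 0 d)) (hint : IntervalIntegrable f volume 0 d) :
    Tendsto (fun N : ℕ ↦ (1 / (N : ℝ)) * ∑ k ∈ Finset.range ⌊c * N⌋₊, f ((k + 1) / N))
      atTop (𝓝 (∫ t in (0 : ℝ)..c, f t)) := by
  simpa [intervalIntegral.integral_neg] using (hf.neg.tendsto_riemannSum hc hcd hint.neg).neg

namespace Real

theorem strictAntiOn_sin_div : StrictAntiOn (fun x ↦ sin x / x) (Ioc 0 π) := by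
  intro x hx y hy hxy
  have := strictConcaveOn_sin_Icc.secant_strict_mono (a := 0) ⟨le_rfl, pi_pos.le⟩
    (Ioc_subset_Icc_self hx) (Ioc_subset_Icc_self hy) hx.1.ne' hy.1.ne' hxy
  simpa using this

theorem log_two_mul_sin_pi_mul_sub_log {x : ℝ} (hx : x ∈ Ioo 0 1) :
    log (2 * sin (π * x)) - log x = log (2 * π * (sin (π * x) / (π * x))) := by
  have hsin : 0 < sin (π * x) :=
    sin_pos_of_pos_of_lt_pi (by nlinarith [hx.1, pi_pos]) (by nlinarith [hx.2, pi_pos])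
  rw [← log_div (by positivity) hx.1.ne']
  congr 1
  field_simp [pi_pos.ne']

theorem antitoneOn_log_two_mul_sin_pi_mul_sub_log :
    AntitoneOn (fun x ↦ log (2 * sin (π * x)) - log x) (Ioo 0 1) := by
  intro x hx y hy hxy
  have hmem {z : ℝ} (hz : z ∈ Ioo 0 1) : π * z ∈ Ioo 0 π :=
    ⟨by nlinarith [hz.1, pi_pos], by nlinarith [hz.2, pi_pos]⟩
  have hsin : 0 < sin (π * y) / (π * y) :=
    div_pos (sin_pos_of_pos_of_lt_pi (hmem hy).1 (hmem hy).2) (hmem hy).1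
  simp only [log_two_mul_sin_pi_mul_sub_log hx, log_two_mul_sin_pi_mul_sub_log hy]
  exact log_le_log (by positivity) <| mul_le_mul_of_nonneg_left
    (strictAntiOn_sin_div.antitoneOn (Ioo_subset_Ioc_self (hmem hx))
      (Ioo_subset_Ioc_self (hmem hy)) (by gcongr)) (by positivity)

theorem intervalIntegrable_log_two_mul_sin_pi_mul {a b : ℝ} :
    IntervalIntegrable (fun x ↦ log (2 * sin (π * x))) volume a b :=
  MeromorphicOn.intervalIntegrable_log (f := fun x ↦ 2 * sin (π * x))
    (AnalyticOnNhd.meromorphicOn fun _ _ ↦ by fun_prop)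

theorem tendsto_riemannSum_log_two_mul_sin_pi_mul {c : ℝ} (hc0 : 0 ≤ c) (hc1 : c < 1) :
    Tendsto (fun N : ℕ ↦ (1 / (N : ℝ)) *
        ∑ k ∈ Finset.range ⌊c * N⌋₊, log (2 * sin (π * ((k + 1) / N))))
      atTop (𝓝 (∫ x in (0 : ℝ)..c, log (2 * sin (π * x)))) := by
  have hcd : c < (c + 1) / 2 := by linarith
  have hd1 : (c + 1) / 2 < 1 := by linarith
  have hlog := MonotoneOn.tendsto_riemannSum hc0 hcd
    (fun x hx y _ hxy ↦ log_le_log hx.1 hxy) intervalIntegral.intervalIntegrable_log'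
  have hrest := AntitoneOn.tendsto_riemannSum hc0 hcd
    (antitoneOn_log_two_mul_sin_pi_mul_sub_log.mono (Ioc_subset_Ioo_right hd1))
    (intervalIntegrable_log_two_mul_sin_pi_mul.sub intervalIntegral.intervalIntegrable_log')
  rw [intervalIntegral.integral_sub intervalIntegrable_log_two_mul_sin_pi_mul
    intervalIntegral.intervalIntegrable_log'] at hrest
  simpa [← mul_add, ← Finset.sum_add_distrib] using hlog.add hrest

end Real

open Filter in
theorem stmt_14 (c : ℝ) (hc0 : 0 < c) (hc1 : c < 1) :
    Tendsto
      (fun N : ℕ =>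
        (1 / (N : ℝ)) *
          ∑ k ∈ Finset.range ⌊c * N⌋₊, Real.log (2 * Real.sin ((k + 1) * Real.pi / N)))
      atTop
      (nhds ((1 / Real.pi) * ∫ t in (0 : ℝ)..(c * Real.pi), Real.log (2 * Real.sin t))) := by
  have hsubst := intervalIntegral.integral_comp_mul_left (a := 0) (b := c)
    (fun t ↦ Real.log (2 * Real.sin t)) Real.pi_pos.ne'
  rw [mul_zero, mul_comm Real.pi c] at hsubst
  rw [one_div, ← smul_eq_mul, ← hsubst]
  convert Real.tendsto_riemannSum_log_two_mul_sin_pi_mul hc0.le hc1 using 7 with N k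
  ring
end

section
/- Define f(N, k) = (2 sin((n-2+k)π/N))² for integers N ≥ 1, k ≥ 1, and fixed n ≥ 2, and g(N, j) = ∏_{k=1}^{j} f(N, k). For all N sufficiently large, the maximum of g(N, j) over 0 ≤ j ≤ N-1 is attained at some j with ⌊(5/6)N - 2(n-2)⌋ ≤ j ≤ ⌊(5/6)N⌋ - (n-2). -/
/-!
Write `t = n - 2 + k`, so the `k`-th factor is `(2 sin(tπ/N))² = |1 - ζ^t|²` with `ζ = e^{2πi/N}`.
It is `≥ 1` for `N/6 ≤ t ≤ 5N/6` and `≤ 1` for `t ≤ N/6` and for `5N/6 ≤ t ≤ 7N/6`. Hence the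
partial products decrease, then increase up to `j* = ⌊5N/6⌋ - (n - 2)`, then decrease to the end.
Partial products in the initial decreasing stretch are at most `1`, so it remains to see that
`g(N, j*) ≥ 1`. Since `g(N, j*) ≥ g(N, N + 1 - n)`, this follows from
`∏_{0<t<N} |1 - ζ^t|² = N²` (the cyclotomic polynomial `1 + X + ⋯ + X^{N-1}` at `1`), because the
`n - 2` missing factors contribute at most `4^{n-2} ≤ N²`.
-/

/-- `f(N,k) = (2 sin((n-2+k)π/N))²`. -/
noncomputable def fTerm (n N k : ℕ) : ℝ :=
  (2 * Real.sin (((n : ℝ) - 2 + k) * Real.pi / N)) ^ 2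

/-- `g(N,j) = ∏_{k=1}^{j} f(N,k)`. -/
noncomputable def gTerm (n N j : ℕ) : ℝ :=
  ∏ k ∈ Finset.range j, fTerm n N (k + 1)

open Real Finset

section PartialProducts

variable {R : Type*} [CommMonoidWithZero R] [Preorder R] [ZeroLEOneClass R] [PosMulMono R]
  {f : ℕ → R} {i j : ℕ}

theorem prod_range_le_prod_range_of_one_le (hf : ∀ k, 0 ≤ f k) (hij : i ≤ j)
    (h : ∀ k ∈ Ico i j, 1 ≤ f k) : ∏ k ∈ range i, f k ≤ ∏ k ∈ range j, f k := by
  rw [← prod_range_mul_prod_Ico f hij]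
  exact le_mul_of_one_le_right (prod_nonneg fun k _ => hf k) (one_le_prod h)

theorem prod_range_le_prod_range_of_le_one (hf : ∀ k, 0 ≤ f k) (hij : i ≤ j)
    (h : ∀ k ∈ Ico i j, f k ≤ 1) : ∏ k ∈ range j, f k ≤ ∏ k ∈ range i, f k := by
  rw [← prod_range_mul_prod_Ico f hij]
  exact mul_le_of_le_one_right (prod_nonneg fun k _ => hf k) (prod_le_one (fun k _ => hf k) h)

end PartialProducts

theorem one_le_sq_two_mul_sin {x : ℝ} (h₁ : π / 6 ≤ x) (h₂ : x ≤ 5 * π / 6) :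
    1 ≤ (2 * sin x) ^ 2 := by
  have hπ := pi_pos
  have hsin : 1 / 2 ≤ sin x := by
    rw [← sin_pi_div_six]
    rcases le_total x (π / 2) with hx | hx
    · exact sin_le_sin_of_le_of_le_pi_div_two (by linarith) hx h₁
    · rw [← sin_pi_sub x]
      exact sin_le_sin_of_le_of_le_pi_div_two (by linarith) (by linarith) (by linarith)
  nlinarith

theorem sq_two_mul_sin_le_one {x : ℝ} (h : |x| ≤ π / 6) : (2 * sin x) ^ 2 ≤ 1 := by
  obtain ⟨h₁, h₂⟩ := abs_le.1 h
  have hπ := pi_pos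
  have hlo : -(1 / 2) ≤ sin x := by
    rw [← sin_pi_div_six, ← sin_neg]
    exact sin_le_sin_of_le_of_le_pi_div_two (by linarith) (by linarith) h₁
  have hhi : sin x ≤ 1 / 2 := by
    rw [← sin_pi_div_six]
    exact sin_le_sin_of_le_of_le_pi_div_two (by linarith) (by linarith) h₂
  nlinarith

/-- `|1 - ζ ^ t|²` for `ζ = exp (2πi / N)`. -/
noncomputable def chordSq (N t : ℕ) : ℝ := (2 * sin (t * π / N)) ^ 2

theorem chordSq_nonneg (N t : ℕ) : 0 ≤ chordSq N t := sq_nonneg _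

theorem chordSq_le_four (N t : ℕ) : chordSq N t ≤ 4 := by
  unfold chordSq
  nlinarith [sin_le_one (t * π / N), neg_one_le_sin (t * π / N)]

theorem chordSq_pos {N t : ℕ} (h₀ : 0 < t) (h₁ : t < N) : 0 < chordSq N t := by
  have hN : (0 : ℝ) < N := by exact_mod_cast h₀.trans h₁
  have ht : (t : ℝ) < N := by exact_mod_cast h₁
  have hsin : 0 < sin (t * π / N) := by
    apply sin_pos_of_pos_of_lt_pi (by positivity)
    rw [div_lt_iff₀ hN]
    nlinarith [pi_pos]
  unfold chordSq
  positivity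

theorem one_le_chordSq {N t : ℕ} (hN : 0 < N) (h₁ : N ≤ 6 * t) (h₂ : 6 * t ≤ 5 * N) :
    1 ≤ chordSq N t := by
  have hN' : (0 : ℝ) < N := by exact_mod_cast hN
  have h₁' : (N : ℝ) ≤ 6 * t := by exact_mod_cast h₁
  have h₂' : 6 * (t : ℝ) ≤ 5 * N := by exact_mod_cast h₂
  have hπ := pi_pos
  apply one_le_sq_two_mul_sin
  · rw [le_div_iff₀ hN']
    nlinarith
  · rw [div_le_iff₀ hN']
    nlinarith

theorem chordSq_le_one_of_six_mul_le {N t : ℕ} (h : 6 * t ≤ N) : chordSq N t ≤ 1 := by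
  rcases N.eq_zero_or_pos with rfl | hN
  · simp [chordSq]
  have hN' : (0 : ℝ) < N := by exact_mod_cast hN
  have h' : 6 * (t : ℝ) ≤ N := by exact_mod_cast h
  have hπ := pi_pos
  apply sq_two_mul_sin_le_one
  rw [abs_of_nonneg (by positivity), div_le_iff₀ hN']
  nlinarith

theorem chordSq_le_one_of_five_mul_le_six_mul {N t : ℕ} (h₁ : 5 * N ≤ 6 * t)
    (h₂ : 6 * t ≤ 7 * N) : chordSq N t ≤ 1 := by
  rcases N.eq_zero_or_pos with rfl | hN
  · simp [chordSq]
  have hN' : (0 : ℝ) < N := by exact_mod_cast hN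
  have h₁' : 5 * (N : ℝ) ≤ 6 * t := by exact_mod_cast h₁
  have h₂' : 6 * (t : ℝ) ≤ 7 * N := by exact_mod_cast h₂
  have hπ := pi_pos
  have hangle : π - t * π / N = (N - t) * π / N := by field_simp
  unfold chordSq
  rw [← sin_pi_sub, hangle]
  apply sq_two_mul_sin_le_one
  rw [abs_le, le_div_iff₀ hN', div_le_iff₀ hN']
  constructor <;> nlinarith

theorem prod_range_chordSq {N : ℕ} (hN : 0 < N) :
    ∏ k ∈ range (N - 1), chordSq N (k + 1) = N ^ 2 := by
  obtain ⟨M, rfl⟩ : ∃ M, N = M + 1 := ⟨N - 1, by omega⟩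
  have hζ := Complex.isPrimitiveRoot_exp (M + 1) (by omega)
  have hnorm := congrArg (‖·‖) hζ.prod_one_sub_pow_eq_order
  simp only [norm_prod] at hnorm
  have hfactor : ∀ k : ℕ, ‖1 - Complex.exp (2 * π * Complex.I / (M + 1 : ℕ)) ^ (k + 1)‖
      = |2 * sin ((k + 1 : ℕ) * π / (M + 1 : ℕ))| := by
    intro k
    rw [← Complex.exp_nat_mul, norm_sub_rev,
      show ((k + 1 : ℕ) : ℂ) * (2 * π * Complex.I / (M + 1 : ℕ))
        = Complex.I * ((2 * ((k + 1 : ℕ) * π / (M + 1 : ℕ)) : ℝ) : ℂ) by push_cast; ring,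
      Complex.norm_exp_I_mul_ofReal_sub_one, Real.norm_eq_abs, mul_div_cancel_left₀ _ two_ne_zero]
  simp only [hfactor] at hnorm
  rw [Nat.add_sub_cancel]
  calc ∏ k ∈ range M, chordSq (M + 1) (k + 1)
      = (∏ k ∈ range M, |2 * sin ((k + 1 : ℕ) * π / (M + 1 : ℕ))|) ^ 2 := by
        rw [← prod_pow]
        exact prod_congr rfl fun k _ => (sq_abs _).symm
    _ = ((M + 1 : ℕ) : ℝ) ^ 2 := by
        rw [hnorm]
        norm_cast

theorem one_le_prod_range_chordSq {m N : ℕ} (hN : 2 ^ m ≤ N) :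
    1 ≤ ∏ k ∈ range (N - 1 - m), chordSq N (m + k + 1) := by
  have hmN : m < N := (Nat.lt_two_pow_self).trans_le hN
  have hprod := prod_range_chordSq (N := N) (by omega)
  rw [show N - 1 = m + (N - 1 - m) by omega, prod_range_add] at hprod
  set P := ∏ k ∈ range m, chordSq N (k + 1)
  have hP_pos : 0 < P := prod_pos fun k hk => chordSq_pos k.succ_pos (by simp at hk; omega)
  have hP_le : P ≤ (N : ℝ) ^ 2 :=
    calc P ≤ ∏ _k ∈ range m, (4 : ℝ) := prod_le_prod (fun k _ => chordSq_nonneg _ _)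
            fun k _ => chordSq_le_four _ _
      _ = ((2 : ℝ) ^ m) ^ 2 := by rw [prod_const, card_range, ← pow_mul, pow_mul']; norm_num
      _ ≤ (N : ℝ) ^ 2 := by gcongr; exact_mod_cast hN
  exact le_of_mul_le_mul_left (by rwa [mul_one, hprod]) hP_pos

theorem gTerm_eq_prod_chordSq (m N j : ℕ) :
    gTerm (m + 2) N j = ∏ k ∈ range j, chordSq N (m + k + 1) := by
  refine prod_congr rfl fun k _ => ?_
  simp only [fTerm, chordSq]
  push_cast
  ring_nf

theorem gTerm_le_gTerm_peak {m N j : ℕ} (hN_pow : 2 ^ m ≤ N) (hN_lin : 12 * m + 12 ≤ N)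
    (hj : j ≤ N - 1) :
    gTerm (m + 2) N j ≤ gTerm (m + 2) N (5 * N / 6 - m) := by
  simp only [gTerm_eq_prod_chordSq]
  have hf : ∀ k, 0 ≤ chordSq N (m + k + 1) := fun k => chordSq_nonneg _ _
  have hpeak : 1 ≤ ∏ k ∈ range (5 * N / 6 - m), chordSq N (m + k + 1) :=
    (one_le_prod_range_chordSq hN_pow).trans <|
      prod_range_le_prod_range_of_le_one hf (by omega) fun k hk =>
        chordSq_le_one_of_five_mul_le_six_mul (by simp at hk; omega) (by simp at hk; omega)
  rcases le_or_gt j (5 * N / 6 - m) with hj_le | hj_gt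
  · rcases le_or_gt N (6 * (m + j + 1)) with hj_mid | hj_low
    · exact prod_range_le_prod_range_of_one_le hf hj_le fun k hk =>
        one_le_chordSq (by omega) (by simp at hk; omega) (by simp at hk; omega)
    · calc ∏ k ∈ range j, chordSq N (m + k + 1)
          ≤ ∏ k ∈ range 0, chordSq N (m + k + 1) :=
            prod_range_le_prod_range_of_le_one hf j.zero_le fun k hk =>
              chordSq_le_one_of_six_mul_le (by simp at hk; omega)
        _ = 1 := prod_range_zero _
        _ ≤ _ := hpeak
  · exact prod_range_le_prod_range_of_le_one hf hj_gt.le fun k hk =>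
      chordSq_le_one_of_five_mul_le_six_mul (by simp at hk; omega) (by simp at hk; omega)

theorem stmt_16 (n : ℕ) (hn : 2 ≤ n) :
    ∃ N₀ : ℕ, ∀ N : ℕ, N₀ ≤ N →
      ∃ j : ℕ,
        (⌊(5 : ℝ) / 6 * N - 2 * ((n : ℝ) - 2)⌋ ≤ (j : ℤ)) ∧
        ((j : ℤ) ≤ ⌊(5 : ℝ) / 6 * N⌋ - ((n : ℤ) - 2)) ∧
        ∀ j' : ℕ, j' ≤ N - 1 → gTerm n N j' ≤ gTerm n N j := by
  obtain ⟨m, rfl⟩ : ∃ m, n = m + 2 := ⟨n - 2, by omega⟩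
  refine ⟨max (2 ^ m) (12 * m + 12), fun N hN => ?_⟩
  have hN_lin := le_of_max_le_right hN
  have hfloor : ⌊(5 : ℝ) / 6 * N⌋ = ((5 * N / 6 : ℕ) : ℤ) := by
    rw [show (5 : ℝ) / 6 * N = ((5 * N : ℕ) : ℝ) / (6 : ℕ) by push_cast; ring,
      Int.floor_div_natCast, Int.floor_natCast]
    norm_cast
  refine ⟨5 * N / 6 - m, ?_, ?_, fun j hj =>
    gTerm_le_gTerm_peak (le_of_max_le_left hN) hN_lin hj⟩
  · rw [show 2 * (((m + 2 : ℕ) : ℝ) - 2) = ((2 * m : ℕ) : ℝ) by push_cast; ring,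
      Int.floor_sub_natCast, hfloor]
    omega
  · rw [hfloor]
    omega
end
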